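/- arXiv:1107.0709 — 5 statements merged into one kernel-verified Lean document; each statement's English description precedes it below -/
import Mathlib

section
/- If B^{IJ} and C^{IJ} are antisymmetric tensors on ℝ⁴ and there exists a nonzero vector N^I such that (⋆B)^{IJ}N_J = 0 and (⋆C)^{IJ}N_J = 0, then ε_{IJKL}B^{IJ}C^{KL} = 0. -/
/-! Contracting the Schouten identity (antisymmetrising `ε_{JKLM} N_I` over five indices gives zero
in dimension four) with `B^{JK} C^{LM}` expresses `(ε_{JKLM} B^{JK} C^{LM}) N_I` through
`B_{IJ} (⋆C N)^J` and `C_{IJ} (⋆B N)^J`. Both vanish by hypothesis, and `N_I ≠ 0` for some `I`. -/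

noncomputable section
open scoped BigOperators

/-- Sign of an integer, as a real number. -/
def sgnZ (x : ℤ) : ℝ := if 0 < x then 1 else if x < 0 then -1 else 0

/-- Levi-Civita symbol ε_{IJKL} on ℝ⁴, with ε_{0123} = 1. -/
def eps4 (a b c d : Fin 4) : ℝ :=
  sgnZ ((b:ℤ) - a) * sgnZ ((c:ℤ) - a) * sgnZ ((d:ℤ) - a) *
  sgnZ ((c:ℤ) - b) * sgnZ ((d:ℤ) - b) * sgnZ ((d:ℤ) - c)

/-- Levi-Civita symbol on indices 1,2,3 (here `Fin 3`). -/
def eps3 (a b c : Fin 3) : ℝ := sgnZ ((b:ℤ) - a) * sgnZ ((c:ℤ) - a) * sgnZ ((c:ℤ) - b)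

/-- Antisymmetry of a 4×4 real array. -/
def Antisym (B : Fin 4 → Fin 4 → ℝ) : Prop := ∀ I J, B I J = - B J I

/-- Self-dual part B_+^i = (1/4) ε^i_{jk} B^{jk} + (1/2) B^{0i}. -/
def Bplus (B : Fin 4 → Fin 4 → ℝ) (i : Fin 3) : ℝ :=
  (1/4) * ∑ j, ∑ k, eps3 i j k * B j.succ k.succ + (1/2) * B 0 i.succ

/-- Anti-self-dual part B_-^i = (1/4) ε^i_{jk} B^{jk} - (1/2) B^{0i}. -/
def Bminus (B : Fin 4 → Fin 4 → ℝ) (i : Fin 3) : ℝ :=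
  (1/4) * ∑ j, ∑ k, eps3 i j k * B j.succ k.succ - (1/2) * B 0 i.succ

/-- Hodge dual (⋆B)^{IJ} = (1/2) ε^{IJ}_{KL} B^{KL} (Euclidean metric). -/
def hodge (B : Fin 4 → Fin 4 → ℝ) (I J : Fin 4) : ℝ :=
  (1/2) * ∑ K, ∑ L, eps4 I J K L * B K L

def epsPairing (B C : Fin 4 → Fin 4 → ℝ) : ℝ :=
  ∑ I, ∑ J, ∑ K, ∑ L, eps4 I J K L * B I J * C K L

lemma Antisym.apply_self {B : Fin 4 → Fin 4 → ℝ} (h : Antisym B) (I : Fin 4) : B I I = 0 := by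
  linarith [h I I]

lemma epsPairing_mul {B C : Fin 4 → Fin 4 → ℝ} (hB : Antisym B) (hC : Antisym C)
    (N : Fin 4 → ℝ) (I : Fin 4) :
    epsPairing B C * N I =
      -4 * (∑ J, B I J * ∑ K, hodge C J K * N K + ∑ J, C I J * ∑ K, hodge B J K * N K) := by
  fin_cases I <;>
  · simp only [epsPairing, hodge, Fin.sum_univ_four, Fin.reduceFinMk]
    norm_num [eps4, sgnZ, hB.apply_self, hC.apply_self, hB 1 0, hB 2 0, hB 3 0, hB 2 1, hB 3 1,
      hB 3 2, hC 1 0, hC 2 0, hC 3 0, hC 2 1, hC 3 1, hC 3 2]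
    ring

/-- If antisymmetric B, C on ℝ⁴ admit a common nonzero vector N with
(⋆B)^{IJ}N_J = 0 and (⋆C)^{IJ}N_J = 0, then ε_{IJKL}B^{IJ}C^{KL} = 0. -/
theorem common_normal_eps_vanishes (B C : Fin 4 → Fin 4 → ℝ)
    (hB : Antisym B) (hC : Antisym C) (N : Fin 4 → ℝ) (hN : N ≠ 0)
    (hBN : ∀ I, ∑ J, hodge B I J * N J = 0)
    (hCN : ∀ I, ∑ J, hodge C I J * N J = 0) :
    (∑ I, ∑ J, ∑ K, ∑ L, eps4 I J K L * B I J * C K L) = 0 := by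
  obtain ⟨i, hNi⟩ := Function.ne_iff.mp hN
  have h := epsPairing_mul hB hC N i
  simp only [hBN, hCN, mul_zero, Finset.sum_const_zero, add_zero] at h
  exact (mul_eq_zero.mp h).resolve_right hNi
end
end

section
/- Let {B_{ab}^{IJ}} be a discrete Plebanski field (antisymmetric in ab, satisfying closure at every a) on a nondegenerate ordered 4-simplex σ in ℝ⁴, and let {I_{ab}^{μν}} be the corresponding geometric triangle bivectors, which also satisfy antisymmetry and closure and whose restriction to pairs 0 ≤ i < j ≤ 3 forms a basis of Λ²ℝ⁴. Then there exists a unique constant so(4)-valued 2-form B_{μν}^{IJ} such that I_{ab}^{μν}B_{μν}^{IJ} = B_{ab}^{IJ} for all a ≠ b. -/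
/-!
A linear map on Λ²ℝ⁴ is fixed by its values on the basis `I_{ij}`, `0 ≤ i < j ≤ 3`, so
`I_{ij} ↦ B_{ij}` is the only candidate. It sends every other `I_{ab}` to `B_{ab}` because both
families obey the same linear relations: antisymmetry handles `i > j`, and closure at `a`
expresses `I_{a4}` and `B_{a4}` through the `I_{ac}` and `B_{ac}` with `c ≤ 3`.
-/

noncomputable section

/-- The 6-dimensional space Λ²ℝ⁴ of antisymmetric tensors on ℝ⁴ (used both for the
space of bivectors in the spacetime indices μν and for so(4) in the internal
indices IJ). -/
def AntisymSub : Submodule ℝ (Fin 4 → Fin 4 → ℝ) where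
  carrier := {A | ∀ i j, A i j = - A j i}
  add_mem' := by
    intro a b ha hb i j
    simp only [Pi.add_apply]
    rw [ha i j, hb i j]; ring
  zero_mem' := by intro i j; simp
  smul_mem' := by
    intro c a ha i j
    simp only [Pi.smul_apply, smul_eq_mul]
    rw [ha i j]; ring

open Finset

theorem Module.Basis.existsUnique_linearMap_apply_eq {ι R M N : Type*} [Semiring R]
    [AddCommMonoid M] [Module R M] [AddCommMonoid N] [Module R N]
    (b : Module.Basis ι R M) (g : ι → N) : ∃! L : M →ₗ[R] N, ∀ i, L (b i) = g i :=
  ⟨b.constr ℕ g, b.constr_basis ℕ g, fun L hL => b.ext fun i => by rw [hL, b.constr_basis]⟩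

theorem Finset.eq_neg_sum_erase_erase_of_sum_erase_eq_zero {ι M : Type*} [Fintype ι]
    [DecidableEq ι] [AddCommGroup M] {x : ι → M} {a b : ι} (hba : b ≠ a)
    (hx : ∑ c ∈ univ.erase a, x c = 0) : x b = -∑ c ∈ (univ.erase a).erase b, x c := by
  rw [sum_erase_eq_sub (mem_erase.2 ⟨hba, mem_univ b⟩), hx, zero_sub, neg_neg]

section Extension

variable {M N F : Type*} [AddCommGroup M] [AddCommGroup N] [FunLike F M N]
  [AddMonoidHomClass F M N] (L : F)

theorem map_eq_of_antisymm_of_forall_lt {α : Type*} [LinearOrder α] {f : α → α → M}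
    {g : α → α → N} (hf : ∀ a b, f a b = -f b a) (hg : ∀ a b, g a b = -g b a)
    (h : ∀ a b, a < b → L (f a b) = g a b) {a b : α} (hab : a ≠ b) : L (f a b) = g a b := by
  rcases hab.lt_or_gt with hlt | hgt
  · exact h a b hlt
  · rw [hf, hg, map_neg, h b a hgt]

theorem map_eq_of_closure_of_forall_castSucc {n : ℕ} {f : Fin (n + 1) → Fin (n + 1) → M}
    {g : Fin (n + 1) → Fin (n + 1) → N} (hf : ∀ a b, f a b = -f b a)
    (hg : ∀ a b, g a b = -g b a) (hf_closure : ∀ a, ∑ b ∈ univ.erase a, f a b = 0)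
    (hg_closure : ∀ a, ∑ b ∈ univ.erase a, g a b = 0)
    (h : ∀ i j : Fin n, i ≠ j → L (f i.castSucc j.castSucc) = g i.castSucc j.castSucc)
    {a b : Fin (n + 1)} (hab : a ≠ b) : L (f a b) = g a b := by
  have h_last (i : Fin n) : L (f i.castSucc (Fin.last n)) = g i.castSucc (Fin.last n) := by
    have hne := (Fin.castSucc_lt_last i).ne'
    rw [eq_neg_sum_erase_erase_of_sum_erase_eq_zero hne (hf_closure _),
      eq_neg_sum_erase_erase_of_sum_erase_eq_zero hne (hg_closure _), map_neg, map_sum]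
    congr 1
    refine sum_congr rfl fun c hc => ?_
    obtain ⟨hc_last, hc_i, -⟩ := by simpa only [mem_erase] using hc
    obtain ⟨k, rfl⟩ := Fin.exists_castSucc_eq.mpr hc_last
    exact h i k fun hik => hc_i (congrArg Fin.castSucc hik).symm
  induction a using Fin.lastCases <;> induction b using Fin.lastCases
  · exact absurd rfl hab
  · rw [hf, hg, map_neg, h_last]
  · exact h_last _
  · exact h _ _ fun hij => hab (congrArg Fin.castSucc hij)

end Extension

/-- Let {B_{ab}} be a discrete Plebanski field (antisymmetric in ab, closure at
every a) valued in so(4), and {I_{ab}} the triangle bivectors of a nondegenerate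
ordered 4-simplex, also antisymmetric and satisfying closure, such that
{I_{ij} : 0 ≤ i < j ≤ 3} is a basis of Λ²ℝ⁴.  Then there is a unique constant
so(4)-valued two-form, i.e. a unique linear map Λ²ℝ⁴ → so(4), sending I_{ab} to
B_{ab} for all a ≠ b. -/
theorem unique_constant_two_form
    (B I : Fin 5 → Fin 5 → AntisymSub)
    (hBorient : ∀ a b, B a b = - B b a)
    (hBclosure : ∀ a : Fin 5, ∑ b ∈ Finset.univ.erase a, B a b = 0)
    (hIorient : ∀ a b, I a b = - I b a)
    (hIclosure : ∀ a : Fin 5, ∑ b ∈ Finset.univ.erase a, I a b = 0)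
    (hIindep : LinearIndependent ℝ
      (fun p : {p : Fin 4 × Fin 4 // p.1 < p.2} =>
        I p.1.1.castSucc p.1.2.castSucc))
    (hIspan : Submodule.span ℝ
      (Set.range (fun p : {p : Fin 4 × Fin 4 // p.1 < p.2} =>
        I p.1.1.castSucc p.1.2.castSucc)) = ⊤) :
    ∃! L : AntisymSub →ₗ[ℝ] AntisymSub, ∀ a b : Fin 5, a ≠ b → L (I a b) = B a b := by
  have h_iff (L : AntisymSub →ₗ[ℝ] AntisymSub) : (∀ a b : Fin 5, a ≠ b → L (I a b) = B a b) ↔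
      ∀ p : {p : Fin 4 × Fin 4 // p.1 < p.2},
        L (I p.1.1.castSucc p.1.2.castSucc) = B p.1.1.castSucc p.1.2.castSucc := by
    refine ⟨fun h p => h _ _ (Fin.castSucc_injective 4 |>.ne p.2.ne), fun h a b hab => ?_⟩
    refine map_eq_of_closure_of_forall_castSucc L hIorient hBorient hIclosure hBclosure
      (fun i j hij => ?_) hab
    exact map_eq_of_antisymm_of_forall_lt L (fun _ _ => hIorient _ _) (fun _ _ => hBorient _ _)
      (fun i j hij => h ⟨(i, j), hij⟩) hij
  simpa only [existsUnique_congr h_iff, Module.Basis.mk_apply] using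
    (Module.Basis.mk hIindep hIspan.ge).existsUnique_linearMap_apply_eq
      fun p => B p.1.1.castSucc p.1.2.castSucc
end
end

section
/- For a nondegenerate co-tetrad e^I_μ, the 2-form B^{IJ} = e^I ∧ e^J satisfies η^{μνρσ}ε_{IJKL}(e^I∧e^J)_{μν}(e^K∧e^L)_{ρσ} = 4!·2²·det(e) ≠ 0, and moreover the Plebanski constraint ε_{IJKL}(B^{IJ}_{μν}B^{KL}_{ρσ} − (1/4!)η_{μνρσ}η^{αβγδ}B^{IJ}_{αβ}B^{KL}_{γδ}) = 0 holds for B = e∧e. -/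
noncomputable section
open scoped BigOperators

/-- The co-tetrad wedge B^{IJ}_{μν} = (e^I ∧ e^J)_{μν}. -/
def ew (e : Matrix (Fin 4) (Fin 4) ℝ) (K L μ ν : Fin 4) : ℝ :=
  e K μ * e L ν - e K ν * e L μ

/-! ### Auxiliary lemmas -/

lemma c0' : (((0:Fin 4):ℤ)) = 0 := by decide
lemma c1' : (((1:Fin 4):ℤ)) = 1 := by decide
lemma c2' : (((2:Fin 4):ℤ)) = 2 := by decide
lemma c3' : (((3:Fin 4):ℤ)) = 3 := by decide
lemma v0' : (((0:Fin 4)):ℕ) = 0 := rfl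
lemma v1' : (((1:Fin 4)):ℕ) = 1 := rfl
lemma v2' : (((2:Fin 4)):ℕ) = 2 := rfl
lemma v3' : (((3:Fin 4)):ℕ) = 3 := rfl

lemma sgnZ_neg (x : ℤ) : sgnZ (-x) = - sgnZ x := by
  rcases lt_trichotomy x 0 with h | h | h <;>
    simp [sgnZ, h, not_lt.2 h.le, neg_pos, neg_neg_iff_pos]

lemma eps4_swap01 (a b c d : Fin 4) : eps4 b a c d = - eps4 a b c d := by
  unfold eps4
  rw [show ((a:ℤ) - b) = -((b:ℤ) - a) by ring, sgnZ_neg]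
  ring

lemma eps4_swap23 (a b c d : Fin 4) : eps4 a b d c = - eps4 a b c d := by
  unfold eps4
  rw [show ((c:ℤ) - d) = -((d:ℤ) - c) by ring, sgnZ_neg]
  ring

lemma det_fin_four' (M : Matrix (Fin 4) (Fin 4) ℝ) : M.det =
    M 0 0 * (M 1 1 * (M 2 2 * M 3 3 - M 2 3 * M 3 2) - M 1 2 * (M 2 1 * M 3 3 - M 2 3 * M 3 1) + M 1 3 * (M 2 1 * M 3 2 - M 2 2 * M 3 1))
  - M 0 1 * (M 1 0 * (M 2 2 * M 3 3 - M 2 3 * M 3 2) - M 1 2 * (M 2 0 * M 3 3 - M 2 3 * M 3 0) + M 1 3 * (M 2 0 * M 3 2 - M 2 2 * M 3 0))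
  + M 0 2 * (M 1 0 * (M 2 1 * M 3 3 - M 2 3 * M 3 1) - M 1 1 * (M 2 0 * M 3 3 - M 2 3 * M 3 0) + M 1 3 * (M 2 0 * M 3 1 - M 2 1 * M 3 0))
  - M 0 3 * (M 1 0 * (M 2 1 * M 3 2 - M 2 2 * M 3 1) - M 1 1 * (M 2 0 * M 3 2 - M 2 2 * M 3 0) + M 1 2 * (M 2 0 * M 3 1 - M 2 1 * M 3 0)) := by
  rw [Matrix.det_succ_row_zero]
  simp [Fin.sum_univ_succ, Matrix.det_fin_three, Matrix.submatrix,
    Fin.succAbove, Fin.castSucc, Fin.castAdd, Fin.castLE,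
    show (Fin.succ 2 : Fin 4) = 3 from rfl]
  ring

lemma det_expand (M : Matrix (Fin 4) (Fin 4) ℝ) :
    (∑ I, ∑ J, ∑ K, ∑ L, eps4 I J K L * M I 0 * M J 1 * M K 2 * M L 3) = M.det := by
  rw [det_fin_four']
  simp only [Fin.sum_univ_four]
  norm_num [eps4, sgnZ, c0', c1', c2', c3']
  ring

/-- Column-selection matrix. -/
def colSel (a b c d : Fin 4) : Matrix (Fin 4) (Fin 4) ℝ :=
  fun i j => if ![a,b,c,d] j = i then 1 else 0

set_option maxHeartbeats 1000000 in
lemma det_colSel0 (b c d : Fin 4) : (colSel 0 b c d).det = eps4 0 b c d := by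
  fin_cases b <;> fin_cases c <;> fin_cases d <;>
    · rw [det_fin_four']
      norm_num [colSel, eps4, sgnZ, c0', c1', c2', c3', Fin.ext_iff, v0', v1', v2', v3', Matrix.cons_val_one, Matrix.cons_val_two, Matrix.cons_val_three, -Fin.val_inj]

set_option maxHeartbeats 1000000 in
lemma det_colSel1 (b c d : Fin 4) : (colSel 1 b c d).det = eps4 1 b c d := by
  fin_cases b <;> fin_cases c <;> fin_cases d <;>
    · rw [det_fin_four']
      norm_num [colSel, eps4, sgnZ, c0', c1', c2', c3', Fin.ext_iff, v0', v1', v2', v3', Matrix.cons_val_one, Matrix.cons_val_two, Matrix.cons_val_three, -Fin.val_inj]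

set_option maxHeartbeats 1000000 in
lemma det_colSel2 (b c d : Fin 4) : (colSel 2 b c d).det = eps4 2 b c d := by
  fin_cases b <;> fin_cases c <;> fin_cases d <;>
    · rw [det_fin_four']
      norm_num [colSel, eps4, sgnZ, c0', c1', c2', c3', Fin.ext_iff, v0', v1', v2', v3', Matrix.cons_val_one, Matrix.cons_val_two, Matrix.cons_val_three, -Fin.val_inj]

set_option maxHeartbeats 1000000 in
lemma det_colSel3 (b c d : Fin 4) : (colSel 3 b c d).det = eps4 3 b c d := by
  fin_cases b <;> fin_cases c <;> fin_cases d <;>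
    · rw [det_fin_four']
      norm_num [colSel, eps4, sgnZ, c0', c1', c2', c3', Fin.ext_iff, v0', v1', v2', v3', Matrix.cons_val_one, Matrix.cons_val_two, Matrix.cons_val_three, -Fin.val_inj]

lemma det_colSel (a b c d : Fin 4) : (colSel a b c d).det = eps4 a b c d := by
  fin_cases a
  · exact det_colSel0 b c d
  · exact det_colSel1 b c d
  · exact det_colSel2 b c d
  · exact det_colSel3 b c d

lemma mul_colSel (e : Matrix (Fin 4) (Fin 4) ℝ) (a b c d : Fin 4) (I j : Fin 4) :
    (e * colSel a b c d) I j = e I (![a,b,c,d] j) := by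
  simp [Matrix.mul_apply, colSel]

lemma Tlem (e : Matrix (Fin 4) (Fin 4) ℝ) (a b c d : Fin 4) :
    (∑ I, ∑ J, ∑ K, ∑ L, eps4 I J K L * e I a * e J b * e K c * e L d)
      = e.det * eps4 a b c d := by
  have h := det_expand (e * colSel a b c d)
  rw [Matrix.det_mul, det_colSel] at h
  rw [← h]
  refine Finset.sum_congr rfl fun I _ => Finset.sum_congr rfl fun J _ =>
    Finset.sum_congr rfl fun K _ => Finset.sum_congr rfl fun L _ => ?_
  simp [mul_colSel]

lemma Ulem (e : Matrix (Fin 4) (Fin 4) ℝ) (a b c d : Fin 4) :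
    (∑ I, ∑ J, ∑ K, ∑ L, eps4 I J K L * e a I * e b J * e c K * e d L)
      = e.det * eps4 a b c d := by
  have h := Tlem e.transpose a b c d
  rw [Matrix.det_transpose] at h
  rw [← h]
  refine Finset.sum_congr rfl fun I _ => Finset.sum_congr rfl fun J _ =>
    Finset.sum_congr rfl fun K _ => Finset.sum_congr rfl fun L _ => ?_
  simp [Matrix.transpose_apply]

lemma epsSq : (∑ μ : Fin 4, ∑ ν : Fin 4, ∑ ρ : Fin 4, ∑ σ : Fin 4,
    eps4 μ ν ρ σ * eps4 μ ν ρ σ) = 24 := by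
  simp only [Fin.sum_univ_four]
  norm_num [eps4, sgnZ, c0', c1', c2', c3']

lemma Slem (e : Matrix (Fin 4) (Fin 4) ℝ) (μ ν ρ σ : Fin 4) :
    (∑ I, ∑ J, ∑ K, ∑ L, eps4 I J K L * (ew e I J μ ν * ew e K L ρ σ))
      = 4 * e.det * eps4 μ ν ρ σ := by
  have h : ∀ I J K L : Fin 4, eps4 I J K L * (ew e I J μ ν * ew e K L ρ σ)
      = eps4 I J K L * e I μ * e J ν * e K ρ * e L σ
      - eps4 I J K L * e I μ * e J ν * e K σ * e L ρ
      - eps4 I J K L * e I ν * e J μ * e K ρ * e L σ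
      + eps4 I J K L * e I ν * e J μ * e K σ * e L ρ := by
    intro I J K L; simp only [ew]; ring
  simp only [h, Finset.sum_add_distrib, Finset.sum_sub_distrib]
  rw [Tlem e μ ν ρ σ, Tlem e μ ν σ ρ, Tlem e ν μ ρ σ, Tlem e ν μ σ ρ,
    eps4_swap01 μ ν σ ρ, eps4_swap01 μ ν ρ σ, eps4_swap23 μ ν ρ σ]
  ring

lemma Slem' (e : Matrix (Fin 4) (Fin 4) ℝ) (I J K L : Fin 4) :
    (∑ α, ∑ β, ∑ γ, ∑ δ, eps4 α β γ δ * ew e I J α β * ew e K L γ δ)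
      = 4 * e.det * eps4 I J K L := by
  have h : ∀ a b c d : Fin 4, eps4 a b c d * ew e I J a b * ew e K L c d
      = eps4 a b c d * e I a * e J b * e K c * e L d
      - eps4 a b c d * e I a * e J b * e L c * e K d
      - eps4 a b c d * e J a * e I b * e K c * e L d
      + eps4 a b c d * e J a * e I b * e L c * e K d := by
    intro a b c d; simp only [ew]; ring
  simp only [h, Finset.sum_add_distrib, Finset.sum_sub_distrib]
  rw [Ulem e I J K L, Ulem e I J L K, Ulem e J I K L, Ulem e J I L K,
    eps4_swap01 I J L K, eps4_swap01 I J K L, eps4_swap23 I J K L]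
  ring

/-- For a nondegenerate co-tetrad e, the sector-(I±) two-form B = e∧e is not
degenerate: η^{μνρσ}ε_{IJKL}(e∧e)_{μν}(e∧e)_{ρσ} = 4!·2²·det(e) ≠ 0; moreover
B = e∧e satisfies the Plebanski constraint. -/
theorem sector_I_nondegenerate_and_simple
    (e : Matrix (Fin 4) (Fin 4) ℝ) (he : e.det ≠ 0) :
    (∑ μ, ∑ ν, ∑ ρ, ∑ σ, ∑ I, ∑ J, ∑ K, ∑ L,
        eps4 μ ν ρ σ * eps4 I J K L * ew e I J μ ν * ew e K L ρ σ)
      = (4 * 3 * 2 * 1) * 2^2 * e.det ∧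
    (∑ μ, ∑ ν, ∑ ρ, ∑ σ, ∑ I, ∑ J, ∑ K, ∑ L,
        eps4 μ ν ρ σ * eps4 I J K L * ew e I J μ ν * ew e K L ρ σ) ≠ 0 ∧
    (∀ μ ν ρ σ : Fin 4,
      (∑ I, ∑ J, ∑ K, ∑ L, eps4 I J K L *
        (ew e I J μ ν * ew e K L ρ σ -
          (1/(4*3*2*1)) * eps4 μ ν ρ σ *
            (∑ α, ∑ β, ∑ γ, ∑ δ, eps4 α β γ δ * ew e I J α β * ew e K L γ δ))) = 0) := by
  have main : (∑ μ, ∑ ν, ∑ ρ, ∑ σ, ∑ I, ∑ J, ∑ K, ∑ L,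
      eps4 μ ν ρ σ * eps4 I J K L * ew e I J μ ν * ew e K L ρ σ)
      = (4 * 3 * 2 * 1) * 2^2 * e.det := by
    have step : (∑ μ, ∑ ν, ∑ ρ, ∑ σ, ∑ I, ∑ J, ∑ K, ∑ L,
        eps4 μ ν ρ σ * eps4 I J K L * ew e I J μ ν * ew e K L ρ σ)
        = ∑ μ : Fin 4, ∑ ν : Fin 4, ∑ ρ : Fin 4, ∑ σ : Fin 4,
            (4 * e.det) * (eps4 μ ν ρ σ * eps4 μ ν ρ σ) := by
      refine Finset.sum_congr rfl fun μ _ => Finset.sum_congr rfl fun ν _ =>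
        Finset.sum_congr rfl fun ρ _ => Finset.sum_congr rfl fun σ _ => ?_
      have : (∑ I : Fin 4, ∑ J : Fin 4, ∑ K : Fin 4, ∑ L : Fin 4,
          eps4 μ ν ρ σ * eps4 I J K L * ew e I J μ ν * ew e K L ρ σ)
          = eps4 μ ν ρ σ * ∑ I : Fin 4, ∑ J : Fin 4, ∑ K : Fin 4, ∑ L : Fin 4,
              eps4 I J K L * (ew e I J μ ν * ew e K L ρ σ) := by
        simp only [Finset.mul_sum]
        refine Finset.sum_congr rfl fun I _ => Finset.sum_congr rfl fun J _ =>
          Finset.sum_congr rfl fun K _ => Finset.sum_congr rfl fun L _ => ?_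
        ring
      rw [this, Slem]
      ring
    rw [step]
    simp only [← Finset.mul_sum]
    rw [epsSq]
    ring
  refine ⟨main, ?_, ?_⟩
  · rw [main]
    intro h
    apply he
    have : ((4:ℝ) * 3 * 2 * 1) * 2^2 ≠ 0 := by norm_num
    exact (mul_eq_zero.mp h).resolve_left this
  · intro μ ν ρ σ
    have h : ∀ I J K L : Fin 4, eps4 I J K L *
        (ew e I J μ ν * ew e K L ρ σ -
          (1/(4*3*2*1)) * eps4 μ ν ρ σ *
            (∑ α, ∑ β, ∑ γ, ∑ δ, eps4 α β γ δ * ew e I J α β * ew e K L γ δ))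
        = eps4 I J K L * (ew e I J μ ν * ew e K L ρ σ)
          - (e.det / 6) * eps4 μ ν ρ σ * (eps4 I J K L * eps4 I J K L) := by
      intro I J K L
      rw [Slem']
      ring
    simp only [h, Finset.sum_sub_distrib]
    rw [Slem]
    simp only [← Finset.mul_sum]
    rw [epsSq]
    ring
end
end

section
/- Let γ > 0 with γ ≠ 1, and let j⁻, j⁺ ≥ 0 and k ≥ 0 be real numbers satisfying |j⁺ − j⁻| ≤ k ≤ j⁺ + j⁻. Then the master-constraint eigenvalue M = (1 − 1/γ²)k² + (2/γ)(1/γ − 1)(j⁺)² + (2/γ)(1/γ + 1)(j⁻)² vanishes if and only if k = 2j⁻/|1 − γ| = 2j⁺/(1 + γ). -/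
/-!
Multiplying by `γ²` turns the constraint into
`E = (γ² - 1) k² + 2 (1 - γ) (j⁺)² + 2 (1 + γ) (j⁻)²`, which is a sum of two nonnegative terms
under the Clebsch–Gordan condition:
`E = (1 - γ²) ((j⁺ + j⁻)² - k²) + ((1 - γ) j⁺ - (1 + γ) j⁻)²` for `γ < 1`, and
`E = (γ² - 1) (k² - (j⁺ - j⁻)²) + ((γ - 1) j⁺ - (γ + 1) j⁻)²` for `γ > 1`.
So `E = 0` forces `k` onto the upper (resp. lower) Clebsch–Gordan bound together with a linear
relation between `j⁺` and `j⁻`, which together say `k |1 - γ| = 2 j⁻` and `k (1 + γ) = 2 j⁺`.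
Conversely these two relations make `E` vanish identically.
-/

theorem mul_add_sq_eq_zero_iff {R : Type*} [Ring R] [LinearOrder R] [IsStrictOrderedRing R]
    {a x y : R} (ha : 0 < a) (hx : 0 ≤ x) : a * x + y ^ 2 = 0 ↔ x = 0 ∧ y = 0 := by
  rw [add_eq_zero_iff_of_nonneg (mul_nonneg ha.le hx) (sq_nonneg y), mul_eq_zero,
    pow_eq_zero_iff two_ne_zero, or_iff_right ha.ne']

def rescaledMaster (γ jm jp k : ℝ) : ℝ :=
  (γ ^ 2 - 1) * k ^ 2 + 2 * (1 - γ) * jp ^ 2 + 2 * (1 + γ) * jm ^ 2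

section

variable {γ jm jp k : ℝ}

theorem master_eq_zero_iff_rescaledMaster_eq_zero (hγ : γ ≠ 0) :
    (1 - 1/γ^2) * k^2 + (2/γ) * (1/γ - 1) * jp^2 + (2/γ) * (1/γ + 1) * jm^2 = 0 ↔
      rescaledMaster γ jm jp k = 0 := by
  have hscale : rescaledMaster γ jm jp k =
      γ ^ 2 * ((1 - 1/γ^2) * k^2 + (2/γ) * (1/γ - 1) * jp^2 + (2/γ) * (1/γ + 1) * jm^2) := by
    unfold rescaledMaster
    field_simp
  rw [hscale, mul_eq_zero, or_iff_right (pow_ne_zero 2 hγ)]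

theorem spins_of_rescaledMaster_eq_zero_of_lt_one (hγ : 0 < γ) (hγ1 : γ < 1) (hk : 0 ≤ k)
    (hupper : k ≤ jp + jm) (hE : rescaledMaster γ jm jp k = 0) :
    k * (1 - γ) = 2 * jm ∧ k * (1 + γ) = 2 * jp := by
  have hsum : (1 - γ ^ 2) * ((jp + jm) ^ 2 - k ^ 2) + ((1 - γ) * jp - (1 + γ) * jm) ^ 2 = 0 := by
    unfold rescaledMaster at hE
    linear_combination hE
  obtain ⟨hgap, hbalance⟩ := (mul_add_sq_eq_zero_iff (by nlinarith)
    (sub_nonneg.2 (pow_le_pow_left₀ hk hupper 2))).1 hsum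
  have hk_eq : k = jp + jm := (sq_eq_sq₀ hk (hk.trans hupper)).1 (by linear_combination -hgap)
  constructor
  · linear_combination (1 - γ) * hk_eq + hbalance
  · linear_combination (1 + γ) * hk_eq - hbalance

theorem spins_of_rescaledMaster_eq_zero_of_one_lt (hγ1 : 1 < γ) (hlower : |jp - jm| ≤ k)
    (hupper : k ≤ jp + jm) (hE : rescaledMaster γ jm jp k = 0) :
    k * (γ - 1) = 2 * jm ∧ k * (1 + γ) = 2 * jp := by
  have hsum : (γ ^ 2 - 1) * (k ^ 2 - (jp - jm) ^ 2) + ((γ - 1) * jp - (γ + 1) * jm) ^ 2 = 0 := by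
    unfold rescaledMaster at hE
    linear_combination hE
  have hk : 0 ≤ k := (abs_nonneg _).trans hlower
  obtain ⟨hgap, hbalance⟩ := (mul_add_sq_eq_zero_iff (by nlinarith)
    (sub_nonneg.2 (sq_le_sq' (abs_le.1 hlower).1 (abs_le.1 hlower).2))).1 hsum
  have hjm : 0 ≤ jm := by linarith [(abs_le.1 hlower).2]
  -- `(γ - 1) (j⁺ - j⁻) = 2 j⁻ ≥ 0` selects the sign of the square root
  have hjm_le : jm ≤ jp := by nlinarith
  have hk_eq : k = jp - jm := (sq_eq_sq₀ hk (sub_nonneg.2 hjm_le)).1 (by linear_combination hgap)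
  constructor
  · linear_combination (γ - 1) * hk_eq + hbalance
  · linear_combination (1 + γ) * hk_eq + hbalance

theorem spins_of_rescaledMaster_eq_zero (hγ : 0 < γ) (hγ1 : γ ≠ 1) (hlower : |jp - jm| ≤ k)
    (hupper : k ≤ jp + jm) (hE : rescaledMaster γ jm jp k = 0) :
    k * |1 - γ| = 2 * jm ∧ k * (1 + γ) = 2 * jp := by
  rcases hγ1.lt_or_gt with hlt | hgt
  · rw [abs_of_pos (sub_pos.2 hlt)]
    exact spins_of_rescaledMaster_eq_zero_of_lt_one hγ hlt ((abs_nonneg _).trans hlower) hupper hE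
  · rw [abs_of_neg (sub_neg.2 hgt), neg_sub]
    exact spins_of_rescaledMaster_eq_zero_of_one_lt hgt hlower hupper hE

theorem rescaledMaster_eq_zero_of_spins (hm : k * |1 - γ| = 2 * jm) (hp : k * (1 + γ) = 2 * jp) :
    rescaledMaster γ jm jp k = 0 := by
  have hm_sq : (2 * jm) ^ 2 = (1 - γ) ^ 2 * k ^ 2 := by rw [← hm, mul_pow, sq_abs, mul_comm]
  have hp_sq : (2 * jp) ^ 2 = (1 + γ) ^ 2 * k ^ 2 := by rw [← hp, mul_pow, mul_comm]
  unfold rescaledMaster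
  linear_combination (1 + γ) / 2 * hm_sq + (1 - γ) / 2 * hp_sq

end

theorem master_constraint_solutions_general
    (γ jm jp k : ℝ) (hγ : 0 < γ) (hγ1 : γ ≠ 1)
    (htri₁ : |jp - jm| ≤ k) (htri₂ : k ≤ jp + jm) :
    (1 - 1/γ^2) * k^2 + (2/γ) * (1/γ - 1) * jp^2 + (2/γ) * (1/γ + 1) * jm^2 = 0 ↔
      (k = 2 * jm / |1 - γ| ∧ k = 2 * jp / (1 + γ)) := by
  have hdefect : |1 - γ| ≠ 0 := abs_ne_zero.2 (sub_ne_zero.2 hγ1.symm)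
  rw [master_eq_zero_iff_rescaledMaster_eq_zero hγ.ne', eq_div_iff hdefect,
    eq_div_iff (by positivity)]
  exact ⟨spins_of_rescaledMaster_eq_zero hγ hγ1 htri₁ htri₂,
    fun ⟨hm, hp⟩ => rescaledMaster_eq_zero_of_spins hm hp⟩

/-- The master-constraint eigenvalue
M = (1 − 1/γ²)k² + (2/γ)(1/γ − 1)(j⁺)² + (2/γ)(1/γ + 1)(j⁻)²
vanishes iff k = 2j⁻/|1−γ| = 2j⁺/(1+γ), for γ > 0, γ ≠ 1, and
j⁻, j⁺, k ≥ 0 satisfying the Clebsch–Gordan condition |j⁺ − j⁻| ≤ k ≤ j⁺ + j⁻. -/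
theorem master_constraint_solutions
    (γ jm jp k : ℝ) (hγ : 0 < γ) (hγ1 : γ ≠ 1)
    (hjm : 0 ≤ jm) (hjp : 0 ≤ jp) (hk : 0 ≤ k)
    (htri₁ : |jp - jm| ≤ k) (htri₂ : k ≤ jp + jm) :
    (1 - 1/γ^2) * k^2 + (2/γ) * (1/γ - 1) * jp^2 + (2/γ) * (1/γ + 1) * jm^2 = 0 ↔
      (k = 2 * jm / |1 - γ| ∧ k = 2 * jp / (1 + γ)) :=
  master_constraint_solutions_general γ jm jp k hγ hγ1 htri₁ htri₂
end

section
/- Suppose {n_{ab}} (a ≠ b ∈ {0,…,4}) are vectors in ℝ³ ≅ su(2), {X^±_a} ⊂ SU(2) satisfy the orientation constraint Ad_{X^+_a}(n_{ab}) = −Ad_{X^+_b}(n_{ba}) and Ad_{X^-_a}(n_{ab}) = −Ad_{X^-_b}(n_{ba}), and X^+_a = ε_a Y X^-_a for signs ε_a and a fixed Y ∈ SU(2). Then the Spin(4)-bivectors B_{ab} := (A_{ab}/2)(−Ad_{X^-_a}(n_{ab}), Ad_{X^+_a}(n_{ab})) (with A_{ab} = A_{ba} > 0) satisfy: there exists a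 fixed unit vector N ∈ ℝ⁴ such that (⋆B_{ab})^{IJ}N_J = 0 for all a ≠ b, where B_{ab} is regarded as an element of so(4) via the identification with su(2)⊕su(2). -/
noncomputable section
open scoped BigOperators

open Matrix

/-- The inverse of the iso so(4) ≅ su(2)⊕su(2):
J^{ij} = ε^{ij}_k (J_+^k + J_-^k), J^{0i} = J_+^i - J_-^i. -/
def fromSD (Jm Jp : Fin 3 → ℝ) (I K : Fin 4) : ℝ :=
  if hI : I = 0 then
    (if hK : K = 0 then 0 else Jp (K.pred hK) - Jm (K.pred hK))
  else if hK : K = 0 then -(Jp (I.pred hI) - Jm (I.pred hI))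
  else ∑ l, eps3 (I.pred hI) (K.pred hK) l * (Jp l + Jm l)

/-- SU(2): 2×2 special unitary matrices. -/
def SU2 := Matrix.specialUnitaryGroup (Fin 2) ℂ

/-- The su(2) basis τ^i = (−i/2)σ^i built from the Pauli matrices. -/
def tau : Fin 3 → Matrix (Fin 2) (Fin 2) ℂ
  | 0 => (-(Complex.I)/2) • !![0, 1; 1, 0]
  | 1 => (-(Complex.I)/2) • !![0, -Complex.I; Complex.I, 0]
  | 2 => (-(Complex.I)/2) • !![1, 0; 0, -1]

/-- The identification ℝ³ ≅ su(2), v ↦ v^i τ_i. -/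
def mmat (v : Fin 3 → ℝ) : Matrix (Fin 2) (Fin 2) ℂ := ∑ i, (v i : ℂ) • tau i

/-! The element `Y ∈ SU(2)` is a unit quaternion `q`, and `X⁺_a = ±Y X⁻_a` gives
`u⁺_{ab} = R_q u⁻_{ab}`, where `R_q` is the rotation `v ↦ q v q̄`. The Hodge star flips the sign
of the anti-self-dual part, so `⋆B_{ab}` is a multiple of the bivector `(u⁻_{ab}, R_q u⁻_{ab})`.
Such a bivector is the image under `(Y, 1) ∈ Spin(4)` of `(u⁻_{ab}, u⁻_{ab})`, which
annihilates `𝒩 = (1,0,0,0)`; hence it annihilates `N = (Y, 1)·𝒩 = q`. -/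

theorem fromSD_eq (Jm Jp : Fin 3 → ℝ) : fromSD Jm Jp =
    !![0, Jp 0 - Jm 0, Jp 1 - Jm 1, Jp 2 - Jm 2;
       Jm 0 - Jp 0, 0, Jp 2 + Jm 2, -(Jp 1 + Jm 1);
       Jm 1 - Jp 1, -(Jp 2 + Jm 2), 0, Jp 0 + Jm 0;
       Jm 2 - Jp 2, Jp 1 + Jm 1, -(Jp 0 + Jm 0), 0] := by
  ext I K
  fin_cases I <;> fin_cases K <;> simp [fromSD, Fin.sum_univ_three, eps3, sgnZ]

theorem fromSD_smul (c : ℝ) (Jm Jp : Fin 3 → ℝ) :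
    fromSD (c • Jm) (c • Jp) = c • fromSD Jm Jp := by
  funext I J
  rw [Pi.smul_apply, Pi.smul_apply, smul_eq_mul]
  fin_cases I <;> fin_cases J <;> simp [fromSD_eq] <;> ring

theorem hodge_fromSD (Jm Jp : Fin 3 → ℝ) : hodge (fromSD Jm Jp) = fromSD (-Jm) Jp := by
  rw [fromSD_eq, fromSD_eq]
  ext I J
  fin_cases I <;> fin_cases J <;> simp [hodge, eps4, sgnZ, Fin.sum_univ_four] <;> ring

/-- The matrix of `v ↦ q v q̄` on imaginary quaternions, for `q = q₀ + q₁ i + q₂ j + q₃ k`. -/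
def quatRot (q : Fin 4 → ℝ) : Matrix (Fin 3) (Fin 3) ℝ :=
  !![q 0 ^ 2 + q 1 ^ 2 - q 2 ^ 2 - q 3 ^ 2, 2 * (q 1 * q 2 - q 0 * q 3), 2 * (q 1 * q 3 + q 0 * q 2);
     2 * (q 1 * q 2 + q 0 * q 3), q 0 ^ 2 - q 1 ^ 2 + q 2 ^ 2 - q 3 ^ 2, 2 * (q 2 * q 3 - q 0 * q 1);
     2 * (q 1 * q 3 - q 0 * q 2), 2 * (q 2 * q 3 + q 0 * q 1), q 0 ^ 2 - q 1 ^ 2 - q 2 ^ 2 + q 3 ^ 2]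

theorem sum_fromSD_quatRot_mul_eq_zero (q : Fin 4 → ℝ) (hq : ∑ i, q i ^ 2 = 1)
    (v : Fin 3 → ℝ) (I : Fin 4) : ∑ J, fromSD v (quatRot q *ᵥ v) I J * q J = 0 := by
  rw [Fin.sum_univ_four] at hq
  rw [fromSD_eq]
  fin_cases I <;>
    simp only [mulVec, dotProduct, quatRot, of_apply, cons_val', cons_val_fin_one, cons_val_zero,
      cons_val_one, cons_val, Fin.zero_eta, Fin.mk_one, Fin.reduceFinMk, Fin.sum_univ_three,
      Fin.sum_univ_four, neg_add_rev, zero_mul, zero_add, add_zero]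
  · linear_combination (q 1 * v 0 + q 2 * v 1 + q 3 * v 2) * hq
  · linear_combination (q 3 * v 1 - q 0 * v 0 - q 2 * v 2) * hq
  · linear_combination (q 1 * v 2 - q 0 * v 1 - q 3 * v 0) * hq
  · linear_combination (q 2 * v 0 - q 0 * v 2 - q 1 * v 1) * hq

theorem mmat_eq (v : Fin 3 → ℝ) :
    mmat v = !![⟨0, -v 2 / 2⟩, ⟨-v 1 / 2, -v 0 / 2⟩; ⟨v 1 / 2, -v 0 / 2⟩, ⟨0, v 2 / 2⟩] := by
  ext i j
  fin_cases i <;> fin_cases j <;> apply Complex.ext <;>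
    simp [mmat, tau, Fin.sum_univ_three] <;> ring

theorem mmat_injective : Function.Injective mmat := by
  intro v w h
  rw [mmat_eq, mmat_eq] at h
  have h01 := congrFun (congrFun h 0) 1
  have h11 := congrFun (congrFun h 1) 1
  simp only [of_apply, cons_val', cons_val_one, cons_val_fin_one, cons_val_zero, Complex.ext_iff,
    ne_eq, OfNat.ofNat_ne_zero, not_false_eq_true, div_left_inj', neg_inj, true_and] at h01 h11
  funext i
  fin_cases i <;> simp <;> linarith

def quatMat (q : Fin 4 → ℝ) : Matrix (Fin 2) (Fin 2) ℂ :=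
  !![⟨q 0, -q 3⟩, ⟨-q 2, -q 1⟩; ⟨q 2, -q 1⟩, ⟨q 0, q 3⟩]

theorem quatMat_mul_mmat_mul_conjTranspose (q : Fin 4 → ℝ) (v : Fin 3 → ℝ) :
    quatMat q * mmat v * (quatMat q)ᴴ = mmat (quatRot q *ᵥ v) := by
  rw [mmat_eq, mmat_eq]
  ext i j
  fin_cases i <;> fin_cases j <;> apply Complex.ext <;>
    simp [quatMat, quatRot, Matrix.mul_apply, Fin.sum_univ_two, Fin.sum_univ_three, mulVec,
      dotProduct] <;> ring

theorem star_eq_adjugate_of_mem_specialUnitaryGroup {m : Type*} [Fintype m] [DecidableEq m]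
    {M : Matrix m m ℂ} (hM : M ∈ specialUnitaryGroup m ℂ) : star M = adjugate M := by
  obtain ⟨hu, hdet⟩ := mem_specialUnitaryGroup_iff.mp hM
  calc star M = star M * M * adjugate M := by
        rw [Matrix.mul_assoc, mul_adjugate, hdet, one_smul, Matrix.mul_one]
    _ = adjugate M := by rw [(mem_unitaryGroup_iff').mp hu, Matrix.one_mul]

theorem exists_quatMat_of_mem_specialUnitaryGroup {M : Matrix (Fin 2) (Fin 2) ℂ}
    (hM : M ∈ specialUnitaryGroup (Fin 2) ℂ) :
    ∃ q : Fin 4 → ℝ, ∑ i, q i ^ 2 = 1 ∧ M = quatMat q := by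
  have hstar := star_eq_adjugate_of_mem_specialUnitaryGroup hM
  have h00 := congrFun (congrFun hstar 0) 0
  have h10 := congrFun (congrFun hstar 1) 0
  have hnorm := congrFun (congrFun (mem_unitaryGroup_iff.mp hM.1) 0) 0
  simp only [star_apply, RCLike.star_def, adjugate_fin_two, of_apply, cons_val', cons_val_zero,
    cons_val_fin_one, Complex.ext_iff, Complex.conj_re, Complex.conj_im, cons_val_one,
    Complex.neg_re, Complex.neg_im, neg_inj, Matrix.mul_apply, Fin.sum_univ_two, one_apply_eq,
    Complex.add_re, Complex.mul_re, mul_neg, sub_neg_eq_add, Complex.one_re, Complex.add_im,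
    Complex.mul_im, Complex.one_im] at h00 h10 hnorm
  refine ⟨![(M 0 0).re, -(M 0 1).im, -(M 0 1).re, -(M 0 0).im], ?_, ?_⟩
  · simp only [Fin.sum_univ_four, cons_val_zero, cons_val_one, even_two, Even.neg_pow, cons_val]
    linear_combination hnorm.1
  · ext i j
    fin_cases i <;> fin_cases j <;> apply Complex.ext <;> simp [quatMat] <;> linarith

theorem smul_mul_mul_conjTranspose_smul_of_sign {m : Type*} [Fintype m] {ε : ℝ}
    (hε : ε = 1 ∨ ε = -1) (M X : Matrix m m ℂ) :
    ((ε : ℂ) • M) * X * ((ε : ℂ) • M)ᴴ = M * X * Mᴴ := by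
  rcases hε with rfl | rfl <;> simp

theorem degenerate_of_equivalent_selfdual_antiselfdual_general
    (A : Fin 5 → Fin 5 → ℝ) (n : Fin 5 → Fin 5 → Fin 3 → ℝ)
    (Xp Xm : Fin 5 → SU2) (Y : SU2) (ε : Fin 5 → ℝ)
    (up um : Fin 5 → Fin 5 → Fin 3 → ℝ)
    (hε : ∀ a, ε a = 1 ∨ ε a = -1)
    (hXY : ∀ a, (Xp a : Matrix (Fin 2) (Fin 2) ℂ) =
      (ε a : ℂ) • ((Y : Matrix (Fin 2) (Fin 2) ℂ) * (Xm a : Matrix (Fin 2) (Fin 2) ℂ)))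
    (hup : ∀ a b, mmat (up a b) =
      (Xp a : Matrix (Fin 2) (Fin 2) ℂ) * mmat (n a b) * (Xp a : Matrix (Fin 2) (Fin 2) ℂ)ᴴ)
    (hum : ∀ a b, mmat (um a b) =
      (Xm a : Matrix (Fin 2) (Fin 2) ℂ) * mmat (n a b) * (Xm a : Matrix (Fin 2) (Fin 2) ℂ)ᴴ) :
    ∃ N : Fin 4 → ℝ, (∑ I, N I ^ 2 = 1) ∧
      ∀ a b, a ≠ b → ∀ I, ∑ J,
        hodge (fromSD (fun i => -(A a b / 2) * um a b i)
                      (fun i => (A a b / 2) * up a b i)) I J * N J = 0 := by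
  obtain ⟨q, hq, hY⟩ := exists_quatMat_of_mem_specialUnitaryGroup Y.2
  refine ⟨q, hq, fun a b _ I => ?_⟩
  have hrot : up a b = quatRot q *ᵥ um a b := by
    apply mmat_injective
    calc mmat (up a b)
        = (Y : Matrix (Fin 2) (Fin 2) ℂ) * ((Xm a : Matrix (Fin 2) (Fin 2) ℂ) * mmat (n a b) *
            (Xm a : Matrix (Fin 2) (Fin 2) ℂ)ᴴ) * (Y : Matrix (Fin 2) (Fin 2) ℂ)ᴴ := by
          rw [hup, hXY, smul_mul_mul_conjTranspose_smul_of_sign (hε a), conjTranspose_mul]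
          simp only [Matrix.mul_assoc]
      _ = mmat (quatRot q *ᵥ um a b) := by
          rw [← hum, hY, quatMat_mul_mmat_mul_conjTranspose]
  have hB : hodge (fromSD (fun i => -(A a b / 2) * um a b i) (fun i => A a b / 2 * up a b i)) =
      (A a b / 2) • fromSD (um a b) (up a b) := by
    rw [hodge_fromSD, ← fromSD_smul]
    congr 1
    funext i
    simp
  rw [hB]
  simp only [Pi.smul_apply, smul_eq_mul, mul_assoc, ← Finset.mul_sum, hrot,
    sum_fromSD_quatRot_mul_eq_zero q hq, mul_zero]

/-- Suppose the group elements satisfy X⁺_a = ε_a Y X⁻_a (signs ε_a, fixed Y), and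
u^±_{ab} = Ad_{X^±_a}(n_{ab}) satisfy the orientation constraint
u^±_{ab} = −u^±_{ba}.  Then the Spin(4) bivectors
B_{ab} = (A_{ab}/2)(−u⁻_{ab}, u⁺_{ab}), regarded in so(4) via the identification
so(4) ≅ su(2)⊕su(2), admit a common unit vector N ∈ ℝ⁴ with (⋆B_{ab})^{IJ}N_J = 0
for all a ≠ b: they are all simple with respect to the same normal. -/
theorem degenerate_of_equivalent_selfdual_antiselfdual
    (A : Fin 5 → Fin 5 → ℝ) (n : Fin 5 → Fin 5 → Fin 3 → ℝ)
    (Xp Xm : Fin 5 → SU2) (Y : SU2) (ε : Fin 5 → ℝ)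
    (up um : Fin 5 → Fin 5 → Fin 3 → ℝ)
    (hAsymm : ∀ a b, A a b = A b a)
    (hApos : ∀ a b, a ≠ b → 0 < A a b)
    (hε : ∀ a, ε a = 1 ∨ ε a = -1)
    (hXY : ∀ a, (Xp a : Matrix (Fin 2) (Fin 2) ℂ) =
      (ε a : ℂ) • ((Y : Matrix (Fin 2) (Fin 2) ℂ) * (Xm a : Matrix (Fin 2) (Fin 2) ℂ)))
    (hup : ∀ a b, mmat (up a b) =
      (Xp a : Matrix (Fin 2) (Fin 2) ℂ) * mmat (n a b) * (Xp a : Matrix (Fin 2) (Fin 2) ℂ)ᴴ)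
    (hum : ∀ a b, mmat (um a b) =
      (Xm a : Matrix (Fin 2) (Fin 2) ℂ) * mmat (n a b) * (Xm a : Matrix (Fin 2) (Fin 2) ℂ)ᴴ)
    (horientp : ∀ a b, a ≠ b → ∀ i, up a b i = - up b a i)
    (horientm : ∀ a b, a ≠ b → ∀ i, um a b i = - um b a i) :
    ∃ N : Fin 4 → ℝ, (∑ I, N I ^ 2 = 1) ∧
      ∀ a b, a ≠ b → ∀ I, ∑ J,
        hodge (fromSD (fun i => -(A a b / 2) * um a b i)
                      (fun i => (A a b / 2) * up a b i)) I J * N J = 0 :=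
  degenerate_of_equivalent_selfdual_antiselfdual_general A n Xp Xm Y ε up um hε hXY hup hum
end
end
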